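/- arXiv:math/0701716 — 13 statements merged into one kernel-verified Lean document; each statement's English description precedes it below -/
import Mathlib

section
/- Let (Q,*) be a quasigroup satisfying the identity (x*y)*(z*y) = x*z. Then: (a) the element a*a is independent of a ∈ Q (denote it e); (b) the operation a·b := a*((b*b)*b) is associative; (c) e is a two-sided identity for ·; (d) for every a ∈ Q the element e*a is a two-sided inverse of a with respect to ·, so (Q,·) is a group; (e) a*b = a·(e*b) for all a, b ∈ Q (i.e., * is the right division a·b⁻¹ of the group (Q,·)). -/
/-- The group multiplication reconstructed from a Ward quasigroup:
`a · b := a * ((b*b)*b)`. -/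
def wardMul {Q : Type*} (op : Q → Q → Q) (a b : Q) : Q :=
  op a (op (op b b) b)

/-- Theorem 2.1, (i) ⇒ (v): a quasigroup satisfying `(x*y)*(z*y) = x*z` gives
rise to a group under `a·b := a*((b*b)*b)`, with identity `e = a*a`
(independent of `a`), inverse of `a` equal to `e*a`, and `a*b = a·(e*b)`. -/
theorem ward_quasigroup_gives_group {Q : Type*} (op : Q → Q → Q)
    (hL : ∀ a : Q, Function.Bijective fun x => op a x)
    (hR : ∀ a : Q, Function.Bijective fun x => op x a)
    (ward : ∀ x y z : Q, op (op x y) (op z y) = op x z) :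
    (∀ a b : Q, op a a = op b b) ∧
    ∀ e : Q, (∀ a : Q, op a a = e) →
      (∀ a b c : Q,
        wardMul op (wardMul op a b) c = wardMul op a (wardMul op b c)) ∧
      (∀ a : Q, wardMul op e a = a) ∧
      (∀ a : Q, wardMul op a e = a) ∧
      (∀ a : Q, wardMul op a (op e a) = e) ∧
      (∀ a : Q, wardMul op (op e a) a = e) ∧
      (∀ a b : Q, op a b = wardMul op a (op e b)) := by
  constructor
  · intro a b
    obtain ⟨y, hy⟩ := (hL a).2 b
    simp only at hy
    have h := ward a y a
    rw [hy] at h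
    rw [h]
  · intro e he
    have h3 : ∀ z x : Q, op e (op z x) = op x z := by
      intro z x
      have h := ward x x z
      rwa [he] at h
    have h2 : ∀ a : Q, op a e = a := by
      intro a
      obtain ⟨y, hy⟩ := (hL a).2 a
      simp only at hy
      have h := ward a y y
      rwa [he, hy] at h
    have h4 : ∀ a : Q, op e (op e a) = a := by
      intro a
      rw [h3 e a, h2]
    have hw : ∀ a b : Q, wardMul op a b = op a (op e b) := by
      intro a b; rw [wardMul, he]
    refine ⟨?_, ?_, ?_, ?_, ?_, ?_⟩
    · intro a b c
      obtain ⟨z, hz⟩ := (hR (op e b)).2 (op e c)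
      simp only at hz
      have l1 : op (op a (op e b)) (op e c) = op a z := by
        rw [← hz]; exact ward a (op e b) z
      have l2 : op (op e c) b = z := by
        rw [← hz]
        have h := ward z (op e b) e
        rwa [h4, h2] at h
      rw [hw, hw, hw, hw, h3, l2, l1]
    · intro a; rw [hw, h4]
    · intro a; rw [hw, he, h2]
    · intro a; rw [hw, h4]; exact he a
    · intro a; rw [hw]; exact he _
    · intro a b; rw [hw, h4]
end

section
/- Let (G,*) be a magma satisfying the identity (x*y)*(z*y) = x*z and such that for every a ∈ G the left translation x ↦ a*x is surjective. Then (G,*) is a quasigroup: for every a ∈ G both the left translation x ↦ a*x and the right translation x ↦ x*a are bijections of G. -/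
/-- Theorem 2.1, (ii) ⇒ (i): a magma satisfying the Ward identity
`(x*y)*(z*y) = x*z` in which every left translation is surjective is a
quasigroup: all left and right translations are bijective. -/
theorem ward_identity_and_left_surjective_is_quasigroup {G : Type*}
    (op : G → G → G)
    (ward : ∀ x y z : G, op (op x y) (op z y) = op x z)
    (hsurj : ∀ a : G, Function.Surjective fun x => op a x) :
    (∀ a : G, Function.Bijective fun x => op a x) ∧
    (∀ a : G, Function.Bijective fun x => op x a) := by
  -- Key lemmas, with a fixed reference element `a` introduced where needed.
  have sq : ∀ a g : G, op g g = op a a := by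
    intro a g
    obtain ⟨y, hy⟩ := hsurj a g
    simp only at hy
    rw [← hy, ward]
  have key : ∀ a z x : G, op (op a a) (op z x) = op x z := by
    intro a z x
    rw [← sq a x, ward]
  have rid : ∀ a g : G, op g (op a a) = g := by
    intro a g
    obtain ⟨y, hy⟩ := hsurj a g
    simp only at hy
    rw [← hy, ← sq a y, ward]
  have recov : ∀ a x b : G, op (op x b) (op (op a a) b) = x := by
    intro a x b
    rw [ward, rid]
  constructor
  · intro a
    constructor
    · intro x y h
      simp only at h
      have h2 : op x a = op y a := by
        rw [← key a a x, h, key]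
      have := recov a x a
      rw [h2, recov] at this
      exact this.symm
    · exact hsurj a
  · intro a
    constructor
    · intro x y h
      simp only at h
      have := recov a x a
      rw [h, recov] at this
      exact this.symm
    · intro b
      obtain ⟨c, hc⟩ := hsurj (op a a) b
      obtain ⟨z, hz⟩ := hsurj a c
      simp only at hc hz
      exact ⟨z, by simp only; rw [← key a a z, hz, hc]⟩
end

section
/- Let (G,*) be a magma and e ∈ G an element such that: (1) a*a = e for every a ∈ G; (2) (a*b)*c = a*(c*(e*b)) for all a, b, c ∈ G; (3) e*a = e*b implies a = b. Then the operation a·b := a*(e*b) makes G into a group with identity element e in which the inverse of a is e*a, and moreover a*b = a·(b⁻¹) for all a, b ∈ G, where b⁻¹ = e*b. -/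
/-- The group multiplication defined from right division: `a · b := a*(e*b)`. -/
def wardDotMul {G : Type*} (op : G → G → G) (e : G) (a b : G) : G :=
  op a (op e b)

/-- Theorem 2.1, (iii) ⇒ (v) (Ward's axioms): if a magma `(G,*)` has an
element `e` with `a*a = e` for all `a`, satisfies
`(a*b)*c = a*(c*(e*b))`, and `e*a = e*b` implies `a = b`, then
`a·b := a*(e*b)` makes `G` a group with identity `e`, inverse `e*a`, and
`a*b = a·(e*b)` (i.e. `a*b = a·b⁻¹` where `b⁻¹ = e*b`). -/
theorem ward_axioms_give_group {G : Type*} (op : G → G → G) (e : G)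
    (hsq : ∀ a : G, op a a = e)
    (hW : ∀ a b c : G, op (op a b) c = op a (op c (op e b)))
    (hcancel : ∀ a b : G, op e a = op e b → a = b) :
    (∀ a b c : G,
      wardDotMul op e (wardDotMul op e a b) c =
        wardDotMul op e a (wardDotMul op e b c)) ∧
    (∀ a : G, wardDotMul op e e a = a) ∧
    (∀ a : G, wardDotMul op e a e = a) ∧
    (∀ a : G, wardDotMul op e a (op e a) = e) ∧
    (∀ a : G, wardDotMul op e (op e a) a = e) ∧
    (∀ a b : G, op a b = wardDotMul op e a (op e b)) := by
  have star : ∀ a c : G, op e c = op a (op c (op e a)) := by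
    intro a c
    have h := hW a a c
    rwa [hsq a] at h
  have h3 : ∀ c : G, op c e = c := by
    intro c
    have h := star e c
    rw [hsq e] at h
    exact (hcancel c (op c e) h).symm
  have h4 : ∀ a : G, op e (op e a) = a := by
    intro a
    have h := star a (op e a)
    rw [hsq (op e a)] at h
    rw [h, h3]
  have lemA : ∀ b c : G, op (op e b) c = op e (op c (op e b)) := by
    intro b c
    exact hW e b c
  refine ⟨?_, ?_, ?_, ?_, ?_, ?_⟩
  · intro a b c
    unfold wardDotMul
    rw [hW a (op e b) (op e c), h4]
    rw [lemA c b]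
  · intro a
    unfold wardDotMul
    exact h4 a
  · intro a
    unfold wardDotMul
    rw [hsq e, h3]
  · intro a
    unfold wardDotMul
    rw [h4, hsq]
  · intro a
    unfold wardDotMul
    exact hsq (op e a)
  · intro a b
    unfold wardDotMul
    rw [h4]
end

section
/- Let (G,*) be a magma and e ∈ G an element such that a*a = e for every a ∈ G. For a ∈ G write a' := e*a. Assume that a'' = a for every a ∈ G, and that (a*b')*c' = a*(b*c')' for all a, b, c ∈ G. Then the operation a·b := a*(e*b) makes G into a group with identity element e in which the inverse of a is a' = e*a, and moreover a*b = a·(b⁻¹) for all a, b ∈ G, where b⁻¹ = e*b. -/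
/-- Theorem 2.1, (iv) ⇒ (v) (Rabinow's axioms): if a magma `(G,*)` has an
element `e` with `a*a = e` for all `a`, and, writing `a' := e*a`, one has
`a'' = a` and `(a*b')*c' = a*(b*c')'` for all `a,b,c`, then
`a·b := a*(e*b)` makes `G` a group with identity `e`, inverse `a' = e*a`,
and `a*b = a·(e*b)` (i.e. `a*b = a·b⁻¹` where `b⁻¹ = e*b`). -/
theorem rabinow_axioms_give_group {G : Type*} (op : G → G → G) (e : G)
    (hsq : ∀ a : G, op a a = e)
    (hdouble : ∀ a : G, op e (op e a) = a)
    (hR : ∀ a b c : G,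
      op (op a (op e b)) (op e c) = op a (op e (op b (op e c)))) :
    (∀ a b c : G,
      wardDotMul op e (wardDotMul op e a b) c =
        wardDotMul op e a (wardDotMul op e b c)) ∧
    (∀ a : G, wardDotMul op e e a = a) ∧
    (∀ a : G, wardDotMul op e a e = a) ∧
    (∀ a : G, wardDotMul op e a (op e a) = e) ∧
    (∀ a : G, wardDotMul op e (op e a) a = e) ∧
    (∀ a b : G, op a b = wardDotMul op e a (op e b)) := by
  have hee : op e e = e := hsq e
  have hre : ∀ a : G, op a e = a := by
    intro a
    have h := hR a (op e a) a
    rw [hdouble, hsq, hsq, hee] at h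
    -- h : op e (op e a) = op a e
    rw [hdouble] at h
    exact h.symm
  refine ⟨fun a b c => ?_, fun a => ?_, fun a => ?_, fun a => ?_, fun a => ?_,
    fun a b => ?_⟩
  · simp only [wardDotMul]; exact hR a b c
  · simp only [wardDotMul]; exact hdouble a
  · simp only [wardDotMul, hee, hre]
  · simp only [wardDotMul, hdouble, hsq]
  · simp only [wardDotMul, hsq]
  · simp only [wardDotMul, hdouble]
end

section
/- Let (Q,*) be a quasigroup satisfying the identity (x*y)*(z*y) = x*z. Then Q satisfies the right semimedial law: (x*y)*(z*y) = (x*z)*(y*y) for all x, y, z ∈ Q. -/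
/-- Lemma 2.5: a quasigroup satisfying the Ward identity `(x*y)*(z*y) = x*z`
satisfies the right semimedial law `(x*y)*(z*y) = (x*z)*(y*y)`. -/
theorem ward_right_semimedial {Q : Type*} (op : Q → Q → Q)
    (hL : ∀ a : Q, Function.Bijective fun x => op a x)
    (hR : ∀ a : Q, Function.Bijective fun x => op x a)
    (ward : ∀ x y z : Q, op (op x y) (op z y) = op x z) :
    ∀ x y z : Q, op (op x y) (op z y) = op (op x z) (op y y) := by
  intro x y z
  obtain ⟨w, hw⟩ := (hR y).2 (op x z)
  simp only at hw
  rw [ward, ← hw, ward w y y, hw]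
end

section
/- Let (Q,*) be a quasigroup (not necessarily Ward) and let Y(Q) = { y ∈ Q : (x*y)*(z*y) = x*z for all x, z ∈ Q }. If y₁ ∈ Y(Q) and y₂ ∈ Y(Q), then y₁*y₂ ∈ Y(Q); that is, Y(Q) is closed under the multiplication of Q. -/
/-- Lemma 2.6, first part: in any quasigroup `(Q,*)`, the set
`Y(Q) = { y | (x*y)*(z*y) = x*z for all x, z }` of right quasiunits is closed
under the multiplication: if `y₁, y₂ ∈ Y(Q)` then `y₁*y₂ ∈ Y(Q)`. -/
theorem right_quasiunits_closed_under_mul {Q : Type*} (op : Q → Q → Q)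
    (hL : ∀ a : Q, Function.Bijective fun x => op a x)
    (hR : ∀ a : Q, Function.Bijective fun x => op x a)
    (y₁ y₂ : Q)
    (h₁ : ∀ x z : Q, op (op x y₁) (op z y₁) = op x z)
    (h₂ : ∀ x z : Q, op (op x y₂) (op z y₂) = op x z) :
    ∀ x z : Q, op (op x (op y₁ y₂)) (op z (op y₁ y₂)) = op x z := by
  intro x z
  obtain ⟨a, ha⟩ := (hR y₂).2 x
  obtain ⟨b, hb⟩ := (hR y₂).2 z
  simp only at ha hb
  subst ha hb
  rw [h₂, h₂, h₂, h₁]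
end

section
/- Let (Q,*) be a finite quasigroup and let Y(Q) = { y ∈ Q : (x*y)*(z*y) = x*z for all x, z ∈ Q }. Suppose X ⊆ Y(Q) is a subset such that the smallest subset of Q containing X and closed under * is all of Q (i.e., X generates Q under multiplication). Then Q is a Ward quasigroup: (x*y)*(z*y) = x*z holds for all x, y, z ∈ Q. -/
/-- The smallest subset of `Q` containing `X` and closed under `op`,
as an inductive predicate. -/
inductive GenBy {Q : Type*} (op : Q → Q → Q) (X : Set Q) : Q → Prop
  | base {x : Q} (hx : x ∈ X) : GenBy op X x
  | mul {a b : Q} (ha : GenBy op X a) (hb : GenBy op X b) : GenBy op X (op a b)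

/-- Lemma 2.6, second part: if a finite quasigroup `(Q,*)` is generated by a
set `X` of right quasiunits (elements `y` with `(x*y)*(z*y) = x*z` for all
`x, z`), then `Q` is a Ward quasigroup: `(x*y)*(z*y) = x*z` for all `x,y,z`. -/
theorem generated_by_quasiunits_is_ward {Q : Type*} [Fintype Q]
    (op : Q → Q → Q)
    (hL : ∀ a : Q, Function.Bijective fun x => op a x)
    (hR : ∀ a : Q, Function.Bijective fun x => op x a)
    (X : Set Q)
    (hX : ∀ y ∈ X, ∀ x z : Q, op (op x y) (op z y) = op x z)
    (hgen : ∀ q : Q, GenBy op X q) :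
    ∀ x y z : Q, op (op x y) (op z y) = op x z := by
  have key : ∀ y, GenBy op X y → ∀ x z : Q, op (op x y) (op z y) = op x z := by
    intro y h
    induction h with
    | base hx => exact hX _ hx
    | @mul a b ha hb iha ihb =>
      intro x z
      obtain ⟨x', rfl⟩ := (hR b).2 x
      obtain ⟨z', rfl⟩ := (hR b).2 z
      simp only []
      rw [ihb, ihb, iha, ihb]
  intro x y z
  exact key y (hgen y) x z
end

section
/- Let G be a finite group with identity e, let s ∈ G have order m, let S = ⟨s⟩, and let a₁ = e, a₂, …, a_k be a transversal of the left cosets of S in G (so every element of G is uniquely of the form a_i·sˣ with 1 ≤ i ≤ k and 0 ≤ x < m). Define M : (Fin k × Fin m) → (Fin k × Fin m) → G by M (i,x) (j,y) = a_i·sˣ·(a_j·sʸ)⁻¹. Then: (i) M (i, x+1) (j, y+1) = M (i,x) (j,y) for all indices, where x+1 and y+1 are taken modulo m (each block of M is a circulant); (ii) for all row indices r, r' and column indices c, c' one has M r c · (M r' c)⁻¹ = M r c' · (M r' c')⁻¹; (iii) M (1,0) c = (a_j·sʸ)⁻¹ when c = (j,y) (the first row lists the inverses of the column labels); (iv) M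 c c = e for every index c; (v) M r c = (M c r)⁻¹ for all indices r, c. -/
/-- The multiplication table of the Ward quasigroup `Wa(G)` of `G`, with rows
and columns ordered coset by coset as `aᵢ, aᵢs, …, aᵢs^(m-1)`:
`M (i,x) (j,y) = aᵢ·sˣ·(aⱼ·sʸ)⁻¹`. -/
def cosetTable {G : Type*} [Group G] {k m : ℕ} (a : Fin k → G) (s : G)
    (r c : Fin k × Fin m) : G :=
  (a r.1 * s ^ (r.2 : ℕ)) * (a c.1 * s ^ (c.2 : ℕ))⁻¹

/-- Proposition 3.1: properties of the multiplication table of `Wa(G)` ordered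
coset by coset with respect to a cyclic subgroup `⟨s⟩` of order `m`:
(i) each block is a circulant; (ii) for any two rows the product of entries in
the same column is constant; (iii) the first row lists the inverses of the
column labels; (iv) the diagonal entries are all `e`; (v) the transpose of the
`(i,j)` block is the `(j,i)` block with all entries inverted. -/
theorem ward_table_properties {G : Type*} [Group G] [Fintype G]
    {k m : ℕ} [NeZero k] [NeZero m] (s : G) (hs : orderOf s = m)
    (a : Fin k → G) (ha : a 0 = 1)
    (htrans : Function.Bijective fun p : Fin k × Fin m => a p.1 * s ^ (p.2 : ℕ)) :
    (∀ (i j : Fin k) (x y : Fin m),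
      cosetTable a s (i, x + 1) (j, y + 1) = cosetTable a s (i, x) (j, y)) ∧
    (∀ r r' c c' : Fin k × Fin m,
      cosetTable a s r c * (cosetTable a s r' c)⁻¹ =
        cosetTable a s r c' * (cosetTable a s r' c')⁻¹) ∧
    (∀ c : Fin k × Fin m,
      cosetTable a s (0, 0) c = (a c.1 * s ^ (c.2 : ℕ))⁻¹) ∧
    (∀ c : Fin k × Fin m, cosetTable a s c c = 1) ∧
    (∀ r c : Fin k × Fin m, cosetTable a s r c = (cosetTable a s c r)⁻¹) := by

  subst hs
  have hpow : ∀ x : Fin (orderOf s), s ^ (((x + 1) : Fin (orderOf s)) : ℕ) = s ^ (x : ℕ) * s := by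
    intro x
    have : (((x + 1) : Fin (orderOf s)) : ℕ) = ((x : ℕ) + 1) % orderOf s := by
      simp [Fin.add_def]
    rw [this, pow_mod_orderOf, pow_succ]
  refine ⟨?_, ?_, ?_, ?_, ?_⟩
  · intro i j x y
    simp only [cosetTable, hpow]
    group
  · intro r r' c c'
    simp only [cosetTable]
    group
  · intro c
    simp [cosetTable, ha]
  · intro c
    simp only [cosetTable]
    group
  · intro r c
    simp [cosetTable, mul_inv_rev]
end

section
/- Let G and H be finite groups, s ∈ G of order m with ⟨s⟩ of index 2 in G, and t ∈ H of order m with ⟨t⟩ of index 2 in H. Let a ∈ G \ ⟨s⟩ and b ∈ H \ ⟨t⟩, and define φ : G → H by φ(sᵏ) = tᵏ and φ(a·sᵏ) = b·tᵏ for 0 ≤ k < m (this is well defined and bijective since every element of G is uniquely sᵏ or a·sᵏ, and similarly for H). If φ(x⁻¹) = φ(x)⁻¹ for all x ∈ G, then φ is a group isomorphism from G onto H. -/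
/-- Index-2 lemma of Section 4: if `G` and `H` are finite groups with cyclic
subgroups `⟨s⟩`, `⟨t⟩` of the same order `m` and of index 2, `a ∉ ⟨s⟩`,
`b ∉ ⟨t⟩`, and `φ : G → H` is the bijection defined by `φ(sᵏ) = tᵏ`,
`φ(a·sᵏ) = b·tᵏ`, then as soon as `φ` respects inverses it is a group
isomorphism. (The inverse pattern relative to a cyclic subgroup of index 2
determines the group.) -/
theorem index_two_inverse_pattern_determines_group
    {G H : Type*} [Group G] [Group H] [Finite G] [Finite H]
    (m : ℕ) (s : G) (t : H) (hs : orderOf s = m) (ht : orderOf t = m)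
    (hiG : (Subgroup.zpowers s).index = 2)
    (hiH : (Subgroup.zpowers t).index = 2)
    (a : G) (ha : a ∉ Subgroup.zpowers s)
    (b : H) (hb : b ∉ Subgroup.zpowers t)
    (φ : G → H)
    (hφ1 : ∀ k : ℕ, φ (s ^ k) = t ^ k)
    (hφ2 : ∀ k : ℕ, φ (a * s ^ k) = b * t ^ k)
    (hinv : ∀ x : G, φ x⁻¹ = (φ x)⁻¹) :
    Function.Bijective φ ∧ ∀ x y : G, φ (x * y) = φ x * φ y := by
  have hm : 0 < m := hs ▸ orderOf_pos s
  have hmz : (0 : ℤ) < (m : ℤ) := by exact_mod_cast hm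
  -- reduce integer powers to natural powers
  have redG : ∀ k : ℤ, s ^ k = s ^ (k % (m : ℤ)).toNat := by
    intro k
    rw [← zpow_natCast, Int.toNat_of_nonneg (Int.emod_nonneg k hmz.ne'), ← hs,
      zpow_mod_orderOf]
  have redH : ∀ k : ℤ, t ^ k = t ^ (k % (m : ℤ)).toNat := by
    intro k
    rw [← zpow_natCast, Int.toNat_of_nonneg (Int.emod_nonneg k hmz.ne'), ← ht,
      zpow_mod_orderOf]
  have φ1 : ∀ k : ℤ, φ (s ^ k) = t ^ k := by
    intro k; rw [redG k, hφ1, ← redH]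
  have φ2 : ∀ k : ℤ, φ (a * s ^ k) = b * t ^ k := by
    intro k; rw [redG k, hφ2, ← redH]
  -- structural facts in G
  have hainv : a⁻¹ ∉ Subgroup.zpowers s := by
    intro h; exact ha (by simpa using (Subgroup.zpowers s).inv_mem h)
  have hsS : s ∈ Subgroup.zpowers s := Subgroup.mem_zpowers s
  obtain ⟨cG, hcG⟩ : ∃ k : ℤ, s ^ k = a * a := by
    rw [← Subgroup.mem_zpowers_iff, Subgroup.mul_mem_iff_of_index_two hiG]
  obtain ⟨rG, hrG⟩ : ∃ k : ℤ, s ^ k = a⁻¹ * s * a := by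
    rw [← Subgroup.mem_zpowers_iff, Subgroup.mul_mem_iff_of_index_two hiG,
      Subgroup.mul_mem_iff_of_index_two hiG]; tauto
  have conjG : ∀ j : ℤ, a⁻¹ * s ^ j * a = s ^ (rG * j) := by
    intro j
    rw [zpow_mul, hrG]
    have h := conj_zpow (i := j) (a := a⁻¹) (b := s)
    simp only [inv_inv] at h
    exact h.symm
  have swapG : ∀ j : ℤ, s ^ j * a = a * s ^ (rG * j) := by
    intro j; rw [← conjG j]; group
  have prodG : ∀ j k : ℤ, (a * s ^ j) * (a * s ^ k) = s ^ (cG + (rG * j + k)) := by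
    intro j k
    calc (a * s ^ j) * (a * s ^ k) = a * (s ^ j * a) * s ^ k := by group
      _ = a * (a * s ^ (rG * j)) * s ^ k := by rw [swapG]
      _ = (a * a) * (s ^ (rG * j) * s ^ k) := by group
      _ = s ^ cG * s ^ (rG * j + k) := by rw [← hcG, ← zpow_add]
      _ = s ^ (cG + (rG * j + k)) := by rw [← zpow_add]
  have hainv' : a⁻¹ = a * s ^ (-cG) := by
    rw [zpow_neg, hcG]; group
  have invG : ∀ k : ℤ, (a * s ^ k)⁻¹ = a * s ^ (rG * (-k) + -cG) := by
    intro k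
    calc (a * s ^ k)⁻¹ = s ^ (-k) * a⁻¹ := by group
      _ = s ^ (-k) * (a * s ^ (-cG)) := by rw [hainv']
      _ = (s ^ (-k) * a) * s ^ (-cG) := by group
      _ = (a * s ^ (rG * (-k))) * s ^ (-cG) := by rw [swapG]
      _ = a * s ^ (rG * (-k) + -cG) := by rw [mul_assoc, ← zpow_add]
  -- structural facts in H
  have hbinv : b⁻¹ ∉ Subgroup.zpowers t := by
    intro h; exact hb (by simpa using (Subgroup.zpowers t).inv_mem h)
  have htT : t ∈ Subgroup.zpowers t := Subgroup.mem_zpowers t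
  obtain ⟨cH, hcH⟩ : ∃ k : ℤ, t ^ k = b * b := by
    rw [← Subgroup.mem_zpowers_iff, Subgroup.mul_mem_iff_of_index_two hiH]
  obtain ⟨rH, hrH⟩ : ∃ k : ℤ, t ^ k = b⁻¹ * t * b := by
    rw [← Subgroup.mem_zpowers_iff, Subgroup.mul_mem_iff_of_index_two hiH,
      Subgroup.mul_mem_iff_of_index_two hiH]; tauto
  have conjH : ∀ j : ℤ, b⁻¹ * t ^ j * b = t ^ (rH * j) := by
    intro j
    rw [zpow_mul, hrH]
    have h := conj_zpow (i := j) (a := b⁻¹) (b := t)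
    simp only [inv_inv] at h
    exact h.symm
  have swapH : ∀ j : ℤ, t ^ j * b = b * t ^ (rH * j) := by
    intro j; rw [← conjH j]; group
  have prodH : ∀ j k : ℤ, (b * t ^ j) * (b * t ^ k) = t ^ (cH + (rH * j + k)) := by
    intro j k
    calc (b * t ^ j) * (b * t ^ k) = b * (t ^ j * b) * t ^ k := by group
      _ = b * (b * t ^ (rH * j)) * t ^ k := by rw [swapH]
      _ = (b * b) * (t ^ (rH * j) * t ^ k) := by group
      _ = t ^ cH * t ^ (rH * j + k) := by rw [← hcH, ← zpow_add]
      _ = t ^ (cH + (rH * j + k)) := by rw [← zpow_add]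
  have hbinv' : b⁻¹ = b * t ^ (-cH) := by
    rw [zpow_neg, hcH]; group
  have invH : ∀ k : ℤ, (b * t ^ k)⁻¹ = b * t ^ (rH * (-k) + -cH) := by
    intro k
    calc (b * t ^ k)⁻¹ = t ^ (-k) * b⁻¹ := by group
      _ = t ^ (-k) * (b * t ^ (-cH)) := by rw [hbinv']
      _ = (t ^ (-k) * b) * t ^ (-cH) := by group
      _ = (b * t ^ (rH * (-k))) * t ^ (-cH) := by rw [swapH]
      _ = b * t ^ (rH * (-k) + -cH) := by rw [mul_assoc, ← zpow_add]
  -- consequences of `hinv`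
  have hmatch : ∀ k : ℤ, t ^ (rG * (-k) + -cG) = t ^ (rH * (-k) + -cH) := by
    intro k
    have h1 := hinv (a * s ^ k)
    rw [invG k, φ2, φ2 k, invH k] at h1
    exact mul_left_cancel h1
  have tc : t ^ cG = t ^ cH := by
    have := hmatch 0
    simp only [neg_zero, mul_zero, zero_add] at this
    rw [zpow_neg, zpow_neg] at this
    exact inv_injective this
  have tr : t ^ rG = t ^ rH := by
    have := hmatch (-1)
    simp only [neg_neg, mul_one] at this
    rw [zpow_add, zpow_add, zpow_neg, zpow_neg, ← tc] at this
    exact mul_right_cancel this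
  have trk : ∀ j : ℤ, t ^ (rG * j) = t ^ (rH * j) := by
    intro j
    rw [zpow_mul, zpow_mul, tr]
  -- coset decompositions
  have decompG : ∀ x : G, (∃ k : ℤ, x = s ^ k) ∨ (∃ k : ℤ, x = a * s ^ k) := by
    intro x
    by_cases hx : x ∈ Subgroup.zpowers s
    · obtain ⟨k, hk⟩ := Subgroup.mem_zpowers_iff.mp hx
      exact Or.inl ⟨k, hk.symm⟩
    · have : a⁻¹ * x ∈ Subgroup.zpowers s := by
        rw [Subgroup.mul_mem_iff_of_index_two hiG]; tauto
      obtain ⟨k, hk⟩ := Subgroup.mem_zpowers_iff.mp this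
      exact Or.inr ⟨k, by rw [hk]; group⟩
  have decompH : ∀ x : H, (∃ k : ℤ, x = t ^ k) ∨ (∃ k : ℤ, x = b * t ^ k) := by
    intro x
    by_cases hx : x ∈ Subgroup.zpowers t
    · obtain ⟨k, hk⟩ := Subgroup.mem_zpowers_iff.mp hx
      exact Or.inl ⟨k, hk.symm⟩
    · have : b⁻¹ * x ∈ Subgroup.zpowers t := by
        rw [Subgroup.mul_mem_iff_of_index_two hiH]; tauto
      obtain ⟨k, hk⟩ := Subgroup.mem_zpowers_iff.mp this
      exact Or.inr ⟨k, by rw [hk]; group⟩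
  -- multiplicativity
  have hmul : ∀ x y : G, φ (x * y) = φ x * φ y := by
    intro x y
    rcases decompG x with ⟨j, rfl⟩ | ⟨j, rfl⟩ <;>
      rcases decompG y with ⟨k, rfl⟩ | ⟨k, rfl⟩
    · rw [← zpow_add, φ1, φ1, φ1, zpow_add]
    · rw [← mul_assoc, swapG j, mul_assoc, ← zpow_add, φ2, φ1, φ2,
        ← mul_assoc, swapH j, mul_assoc, ← zpow_add, zpow_add, zpow_add, trk j]
    · rw [mul_assoc, ← zpow_add, φ2, φ2, φ1, mul_assoc, zpow_add]
    · rw [prodG, φ1, φ2, φ2, prodH]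
      simp only [zpow_add, tc, trk]
  refine ⟨?_, hmul⟩
  -- bijectivity
  have hsurj : Function.Surjective φ := by
    intro h
    rcases decompH h with ⟨k, rfl⟩ | ⟨k, rfl⟩
    · exact ⟨s ^ k, φ1 k⟩
    · exact ⟨a * s ^ k, φ2 k⟩
  have cardG : Nat.card G = m * 2 := by
    rw [← Subgroup.card_mul_index (Subgroup.zpowers s), hiG, Nat.card_zpowers, hs]
  have cardH : Nat.card H = m * 2 := by
    rw [← Subgroup.card_mul_index (Subgroup.zpowers t), hiH, Nat.card_zpowers, ht]
  have : Fintype G := Fintype.ofFinite G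
  have : Fintype H := Fintype.ofFinite H
  rw [Fintype.bijective_iff_surjective_and_card]
  refine ⟨hsurj, ?_⟩
  rw [← Nat.card_eq_fintype_card, ← Nat.card_eq_fintype_card, cardG, cardH]
end

section
/- Let G and H be finite groups. Let s ∈ G have order m with S = ⟨s⟩ a normal subgroup of index 3 in G, and let t ∈ H have order m with T = ⟨t⟩ a normal subgroup of index 3 in H. Let e = a₁, a₂, a₃ be a transversal of the cosets of S in G and e = b₁, b₂, b₃ a transversal of the cosets of T in H, and define φ : G → H by φ(a_i·sᵏ) = b_i·tᵏ for i = 1, 2, 3 and 0 ≤ k < m (a well-defined bijection). If φ(x⁻¹) = φ(x)⁻¹ for all x ∈ G, and additionally φ(a₂·a₃⁻¹) = φ(a₂)·φ(a₃)⁻¹, then φ is a group isomorphism from G onto H. -/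
/-!
Call `(x, y)` good if `φ (x * y) = φ x * φ y`. Because `φ` respects right multiplication by
`⟨s⟩` and inversion, it also respects left multiplication by `⟨s⟩`; so, `⟨s⟩` being normal,
goodness of `(x, y)` only depends on the cosets of `x` and `y`. Pairs where `x`, `y` or `x * y`
lies in `⟨s⟩` are good, and `(x, y)` is good iff `(y⁻¹, x⁻¹)` is. In the quotient of order 3,
writing `g` for the coset of `a₁`, which is also that of `a₂⁻¹`, the only remaining coset pairs
are `(g, g)` and `(g⁻¹, g⁻¹)`, and both are covered by the good pair `(a₁, a₂⁻¹)`.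
-/

open Subgroup

theorem eq_of_mul_ne_one_of_card_eq_three {Q : Type*} [Group Q] (hQ : Nat.card Q = 3)
    {u v : Q} (hu : u ≠ 1) (hv : v ≠ 1) (huv : u * v ≠ 1) : u = v := by
  by_contra hne
  have : Finite Q := Nat.finite_of_card_ne_zero (by omega)
  have hinj : Function.Injective ![1, u, v, u * v] := by
    intro i j h
    fin_cases i <;> fin_cases j <;> simp_all [eq_comm (a := u * v)]
  have := Nat.card_le_card_of_injective _ hinj
  simp only [Nat.card_eq_fintype_card, Fintype.card_fin, hQ] at this
  omega

section

variable {G H : Type*} [Group G] [Group H] {S : Subgroup G} {φ : G → H}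

theorem map_mul_left_of_mem (hinv : ∀ x, φ x⁻¹ = (φ x)⁻¹)
    (hR : ∀ x, ∀ n ∈ S, φ (x * n) = φ x * φ n) {n : G} (hn : n ∈ S) (x : G) :
    φ (n * x) = φ n * φ x := by
  calc φ (n * x) = (φ (x⁻¹ * n⁻¹))⁻¹ := by rw [← hinv, mul_inv_rev, inv_inv, inv_inv]
    _ = φ n * φ x := by rw [hR _ _ (inv_mem hn), hinv, hinv, mul_inv_rev, inv_inv, inv_inv]

theorem map_mul_of_mul_mem (hinv : ∀ x, φ x⁻¹ = (φ x)⁻¹)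
    (hR : ∀ x, ∀ n ∈ S, φ (x * n) = φ x * φ n) {x y : G} (hxy : x * y ∈ S) :
    φ (x * y) = φ x * φ y := by
  have hy : φ y = (φ x)⁻¹ * φ (x * y) := by
    rw [← hinv, ← hR _ _ hxy, inv_mul_cancel_left]
  rw [hy, mul_inv_cancel_left]

theorem map_inv_mul_inv_of_map_mul (hinv : ∀ x, φ x⁻¹ = (φ x)⁻¹) {x y : G}
    (h : φ (x * y) = φ x * φ y) : φ (y⁻¹ * x⁻¹) = φ y⁻¹ * φ x⁻¹ := by
  rw [← mul_inv_rev, hinv, hinv, hinv, h, mul_inv_rev]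

theorem map_mul_of_mk_eq_of_map_mul [S.Normal] (hinv : ∀ x, φ x⁻¹ = (φ x)⁻¹)
    (hR : ∀ x, ∀ n ∈ S, φ (x * n) = φ x * φ n) {x y x' y' : G}
    (hx : (x : G ⧸ S) = x') (hy : (y : G ⧸ S) = y') (h : φ (x * y) = φ x * φ y) :
    φ (x' * y') = φ x' * φ y' := by
  obtain ⟨n, hn, rfl⟩ : ∃ n ∈ S, x' = x * n :=
    ⟨x⁻¹ * x', QuotientGroup.eq.1 hx, (mul_inv_cancel_left x x').symm⟩
  obtain ⟨l, hl, rfl⟩ : ∃ l ∈ S, y' = y * l :=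
    ⟨y⁻¹ * y', QuotientGroup.eq.1 hy, (mul_inv_cancel_left y y').symm⟩
  have hn' : y⁻¹ * n * y ∈ S := by simpa using Subgroup.Normal.conj_mem ‹_› n hn y⁻¹
  have hny : n * y = y * (y⁻¹ * n * y) := by group
  calc φ (x * n * (y * l)) = φ (x * y) * φ (y⁻¹ * n * y) * φ l := by
        rw [← mul_assoc, hR _ _ hl, mul_assoc x, hny, ← mul_assoc, hR _ _ hn']
    _ = φ (x * n) * φ (y * l) := by
        rw [h, hR _ _ hn, hR _ _ hl, mul_assoc (φ x), ← hR _ _ hn', ← hny,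
          map_mul_left_of_mem hinv hR hn]
        group

theorem map_mul_of_index_eq_three [S.Normal] (hS : S.index = 3) (hinv : ∀ x, φ x⁻¹ = (φ x)⁻¹)
    (hR : ∀ x, ∀ n ∈ S, φ (x * n) = φ x * φ n) {x₀ y₀ : G} (hx₀ : x₀ ∉ S)
    (hy₀ : (x₀ : G ⧸ S) = y₀) (h₀ : φ (x₀ * y₀) = φ x₀ * φ y₀) (x y : G) :
    φ (x * y) = φ x * φ y := by
  have hQ : Nat.card (G ⧸ S) = 3 := hS
  have hx₀' : (x₀ : G ⧸ S) ≠ 1 := by rwa [Ne, QuotientGroup.eq_one_iff]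
  by_cases hx : x ∈ S
  · exact map_mul_left_of_mem hinv hR hx y
  by_cases hy : y ∈ S
  · exact hR x y hy
  by_cases hxy : x * y ∈ S
  · exact map_mul_of_mul_mem hinv hR hxy
  rw [← QuotientGroup.eq_one_iff] at hx hy
  rw [← QuotientGroup.eq_one_iff, QuotientGroup.mk_mul] at hxy
  have hxy' : (x : G ⧸ S) = y := eq_of_mul_ne_one_of_card_eq_three hQ hx hy hxy
  by_cases hxx₀ : (x : G ⧸ S) = x₀
  · exact map_mul_of_mk_eq_of_map_mul hinv hR hxx₀.symm (by rw [← hy₀, ← hxx₀, hxy']) h₀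
  have hx₀x : (x₀ : G ⧸ S) = (x : G ⧸ S)⁻¹ := by
    by_contra hne
    have hne' : (x : G ⧸ S) * x₀ ≠ 1 := fun h ↦ hne (mul_eq_one_iff_inv_eq.1 h).symm
    exact hxx₀ (eq_of_mul_ne_one_of_card_eq_three hQ hx hx₀' hne')
  have h := map_mul_of_mk_eq_of_map_mul (x' := y⁻¹) (y' := x⁻¹) hinv hR
    (by rw [QuotientGroup.mk_inv, ← hxy', hx₀x]) (by rw [QuotientGroup.mk_inv, ← hy₀, hx₀x]) h₀
  simpa only [inv_inv] using map_inv_mul_inv_of_map_mul hinv h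

theorem map_mul_zpow_of_map_mul_pow {s : G} {t : H}
    (h : ∀ x (k : ℕ), φ (x * s ^ k) = φ x * t ^ k) (x : G) (k : ℤ) :
    φ (x * s ^ k) = φ x * t ^ k := by
  obtain ⟨n, rfl | rfl⟩ := k.eq_nat_or_neg
  · simpa only [zpow_natCast] using h x n
  · have hx := h (x * s ^ (-n : ℤ)) n
    rw [zpow_neg, zpow_natCast, inv_mul_cancel_right] at hx
    rw [zpow_neg, zpow_natCast, zpow_neg, zpow_natCast]
    exact eq_mul_inv_of_mul_eq hx.symm

theorem map_mul_of_mem_zpowers {s : G} {t : H} (hone : φ 1 = 1)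
    (h : ∀ x (k : ℕ), φ (x * s ^ k) = φ x * t ^ k) (x : G) {n : G} (hn : n ∈ zpowers s) :
    φ (x * n) = φ x * φ n := by
  obtain ⟨k, rfl⟩ := mem_zpowers_iff.1 hn
  have hk := map_mul_zpow_of_map_mul_pow h
  rw [hk, ← one_mul (s ^ k), hk, hone, one_mul]

end

theorem QuotientGroup.mk_injective_of_bijective_mul_pow {G ι : Type*} [Group G] [Finite G]
    {s : G} {a : ι → G}
    (ha : Function.Bijective fun p : ι × Fin (orderOf s) => a p.1 * s ^ (p.2 : ℕ)) :
    Function.Injective fun i ↦ (a i : G ⧸ zpowers s) := by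
  classical
  intro i j hij
  obtain ⟨n, hn, hsn⟩ := Finset.mem_image.1
    (mem_zpowers_iff_mem_range_orderOf.1 (QuotientGroup.eq.1 hij))
  have hpos : 0 < orderOf s := (Finset.mem_range.1 hn).pos
  have h := ha.injective (a₁ := (j, ⟨0, hpos⟩)) (a₂ := (i, ⟨n, Finset.mem_range.1 hn⟩))
    (by simp only [pow_zero, mul_one, hsn, mul_inv_cancel_left])
  exact (congrArg Prod.fst h).symm

theorem index_three_inverse_pattern_determines_group_general
    {G H : Type*} [Group G] [Group H] [Finite G]
    (m : ℕ) (s : G) (t : H) (hs : orderOf s = m)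
    (hnS : (Subgroup.zpowers s).Normal)
    (hiG : (Subgroup.zpowers s).index = 3)
    (a : Fin 3 → G) (b : Fin 3 → H) (ha : a 0 = 1) (hb : b 0 = 1)
    (htG : Function.Bijective fun p : Fin 3 × Fin m => a p.1 * s ^ (p.2 : ℕ))
    (htH : Function.Bijective fun p : Fin 3 × Fin m => b p.1 * t ^ (p.2 : ℕ))
    (φ : G → H)
    (hφ : ∀ (i : Fin 3) (k : ℕ), φ (a i * s ^ k) = b i * t ^ k)
    (hinv : ∀ x : G, φ x⁻¹ = (φ x)⁻¹)
    (h23 : φ (a 1 * (a 2)⁻¹) = φ (a 1) * (φ (a 2))⁻¹) :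
    Function.Bijective φ ∧ ∀ x y : G, φ (x * y) = φ x * φ y := by
  subst hs
  refine ⟨(Function.Bijective.of_comp_iff φ htG).1 ?_, ?_⟩
  · convert htH using 1
    exact funext fun p ↦ hφ p.1 p.2
  have hpow : ∀ x (k : ℕ), φ (x * s ^ k) = φ x * t ^ k := by
    intro x k
    obtain ⟨⟨i, j⟩, rfl⟩ := htG.surjective x
    simp only [mul_assoc, ← pow_add, hφ]
  have hR := map_mul_of_mem_zpowers (by simpa [ha, hb] using hφ 0 0) hpow
  have hcos := QuotientGroup.mk_injective_of_bijective_mul_pow htG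
  have hne_one : ∀ i : Fin 3, i ≠ 0 → (a i : G ⧸ zpowers s) ≠ 1 := fun i hi ↦ by
    rw [← QuotientGroup.mk_one, ← ha]
    exact hcos.ne hi
  have ha₁₂ : (a 1 : G ⧸ zpowers s) = ((a 2)⁻¹ : G) := by
    rw [QuotientGroup.mk_inv, ← mul_eq_one_iff_eq_inv]
    by_contra hne
    exact hcos.ne (by decide : (1 : Fin 3) ≠ 2)
      (eq_of_mul_ne_one_of_card_eq_three hiG (hne_one 1 (by decide)) (hne_one 2 (by decide)) hne)
  refine map_mul_of_index_eq_three hiG hinv hR (x₀ := a 1) ?_ ha₁₂ ?_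
  · rw [← QuotientGroup.eq_one_iff]
    exact hne_one 1 (by decide)
  · rw [h23, hinv]

/-- Lemma 4.2: if `G` and `H` are finite groups with normal cyclic subgroups
`⟨s⟩`, `⟨t⟩` of the same order `m` and of index 3, with transversals
`a₁ = e, a₂, a₃` and `b₁ = e, b₂, b₃`, and `φ : G → H` is the bijection
defined by `φ(aᵢ·sᵏ) = bᵢ·tᵏ`, then as soon as `φ` respects inverses and
respects the single product `a₂·a₃⁻¹` (an entry of the (2,3) block), it is a
group isomorphism. (The table of `Wa(G)` is specified by the inverse pattern
and one entry in the (2,3) block.) -/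
theorem index_three_inverse_pattern_determines_group
    {G H : Type*} [Group G] [Group H] [Finite G] [Finite H]
    (m : ℕ) [NeZero m] (s : G) (t : H) (hs : orderOf s = m) (ht : orderOf t = m)
    (hnS : (Subgroup.zpowers s).Normal) (hnT : (Subgroup.zpowers t).Normal)
    (hiG : (Subgroup.zpowers s).index = 3)
    (hiH : (Subgroup.zpowers t).index = 3)
    (a : Fin 3 → G) (b : Fin 3 → H) (ha : a 0 = 1) (hb : b 0 = 1)
    (htG : Function.Bijective fun p : Fin 3 × Fin m => a p.1 * s ^ (p.2 : ℕ))
    (htH : Function.Bijective fun p : Fin 3 × Fin m => b p.1 * t ^ (p.2 : ℕ))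
    (φ : G → H)
    (hφ : ∀ (i : Fin 3) (k : ℕ), φ (a i * s ^ k) = b i * t ^ k)
    (hinv : ∀ x : G, φ x⁻¹ = (φ x)⁻¹)
    (h23 : φ (a 1 * (a 2)⁻¹) = φ (a 1) * (φ (a 2))⁻¹) :
    Function.Bijective φ ∧ ∀ x y : G, φ (x * y) = φ x * φ y :=
  index_three_inverse_pattern_determines_group_general m s t hs hnS hiG a b ha hb htG htH φ hφ hinv
    h23
end

section
/- Let G be a finite abelian group of odd order and let S be a subgroup of G. Then: (a) for every a ∈ G with a ∉ S, the cosets a·S and a⁻¹·S are distinct; (b) there exists a transversal R of the cosets of S in G (a set containing exactly one element from each coset) such that 1 ∈ R and R is closed under inversion, i.e., a ∈ R implies a⁻¹ ∈ R. -/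
/-- Lemma 4.3: in a finite abelian group `G` of odd order with a subgroup `S`:
(a) for `a ∉ S` the cosets `aS` and `a⁻¹S` are distinct; (b) there is a
transversal of the cosets of `S` containing `1` and closed under inversion. -/
theorem odd_abelian_symmetric_transversal
    {G : Type*} [CommGroup G] [Finite G] (hodd : Odd (Nat.card G))
    (S : Subgroup G) :
    (∀ a : G, a ∉ S →
      (QuotientGroup.mk a : G ⧸ S) ≠ (QuotientGroup.mk a⁻¹ : G ⧸ S)) ∧
    ∃ R : Set G, (1 : G) ∈ R ∧ (∀ a ∈ R, a⁻¹ ∈ R) ∧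
      ∀ g : G, ∃! r : G, r ∈ R ∧
        (QuotientGroup.mk r : G ⧸ S) = (QuotientGroup.mk g : G ⧸ S) := by
  constructor
  · -- part (a)
    intro a ha h
    apply ha
    have hsq : a⁻¹ * a⁻¹ ∈ S := QuotientGroup.eq.mp h
    obtain ⟨k, hk⟩ := hodd
    have hcard : a ^ Nat.card G = 1 := pow_card_eq_one'
    have : a = ((a⁻¹ * a⁻¹)⁻¹) ^ (k + 1) := by
      rw [mul_inv_rev, inv_inv, ← pow_two, ← pow_mul]
      have : a ^ (2 * (k + 1)) = a ^ (Nat.card G) * a := by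
        rw [hk, show 2 * (k + 1) = (2 * k + 1) + 1 from by omega, pow_succ]
      rw [this, hcard, one_mul]
    rw [this]
    exact pow_mem (inv_mem hsq) _
  · -- part (b)
    -- the quotient has odd order
    have hoddQ : Odd (Nat.card (G ⧸ S)) := by
      rcases Nat.even_or_odd (Nat.card (G ⧸ S)) with he | ho
      · exfalso
        have hdvd : Nat.card (G ⧸ S) ∣ Nat.card G :=
          ⟨Nat.card S, Subgroup.card_eq_card_quotient_mul_card_subgroup S⟩
        have : 2 ∣ Nat.card G := dvd_trans he.two_dvd hdvd
        exact (Nat.not_even_iff_odd.mpr hodd) (even_iff_two_dvd.mpr this)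
      · exact ho
    obtain ⟨k, hk⟩ := hoddQ
    -- square root map on the quotient
    set m := k + 1 with hm
    have hsq : ∀ q : G ⧸ S, (q ^ m) * (q ^ m) = q := by
      intro q
      rw [← pow_add]
      have hcard : q ^ Nat.card (G ⧸ S) = 1 := pow_card_eq_one'
      have : q ^ (m + m) = q ^ (Nat.card (G ⧸ S)) * q := by
        rw [hk, show m + m = (2 * k + 1) + 1 from by omega, pow_succ]
      rw [this, hcard, one_mul]
    -- section
    set σ : G ⧸ S → G := Quotient.out with hσ
    have hσmk : ∀ q : G ⧸ S, (QuotientGroup.mk (σ q) : G ⧸ S) = q := fun q =>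
      Quotient.out_eq q
    set f : G ⧸ S → G := fun q => σ (q ^ m) * (σ ((q ^ m)⁻¹))⁻¹ with hf
    have hfmk : ∀ q : G ⧸ S, (QuotientGroup.mk (f q) : G ⧸ S) = q := by
      intro q
      simp only [hf, QuotientGroup.mk_mul, QuotientGroup.mk_inv, hσmk, inv_inv]
      exact hsq q
    have hfinv : ∀ q : G ⧸ S, f q⁻¹ = (f q)⁻¹ := by
      intro q
      simp only [hf, inv_pow, inv_inv, mul_inv_rev, inv_inv]
    refine ⟨Set.range f, ?_, ?_, ?_⟩
    · refine ⟨1, ?_⟩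
      simp only [hf, one_pow, inv_one, mul_inv_cancel]
    · rintro a ⟨q, rfl⟩
      exact ⟨q⁻¹, hfinv q⟩
    · intro g
      refine ⟨f (QuotientGroup.mk g), ⟨⟨_, rfl⟩, hfmk _⟩, ?_⟩
      rintro r ⟨⟨q, rfl⟩, hr⟩
      have : q = QuotientGroup.mk g := by rw [← hfmk q, hr]
      rw [this]
end

section
/- Let G be a finite group of odd order and let S be a central subgroup of G. Then: (a) for every a ∈ G with a ∉ S, the cosets a·S and a⁻¹·S are distinct; (b) there exists a transversal R of the cosets of S in G (a set containing exactly one element from each coset) such that 1 ∈ R and R is closed under inversion, i.e., a ∈ R implies a⁻¹ ∈ R. -/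
/-- Lemma 4.4: in a finite group `G` of odd order with a central subgroup `S`:
(a) for `a ∉ S` the cosets `aS` and `a⁻¹S` are distinct; (b) there is a
transversal of the cosets of `S` containing `1` and closed under inversion. -/
theorem odd_central_symmetric_transversal
    {G : Type*} [Group G] [Finite G] (hodd : Odd (Nat.card G))
    (S : Subgroup G) (hZ : S ≤ Subgroup.center G) :
    (∀ a : G, a ∉ S →
      (QuotientGroup.mk a : G ⧸ S) ≠ (QuotientGroup.mk a⁻¹ : G ⧸ S)) ∧
    ∃ R : Set G, (1 : G) ∈ R ∧ (∀ a ∈ R, a⁻¹ ∈ R) ∧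
      ∀ g : G, ∃! r : G, r ∈ R ∧
        (QuotientGroup.mk r : G ⧸ S) = (QuotientGroup.mk g : G ⧸ S) := by
  haveI : S.Normal := by
    refine ⟨fun n hn g => ?_⟩
    have h := Subgroup.mem_center_iff.mp (hZ hn) g
    have : g * n * g⁻¹ = n := by rw [h, mul_assoc, mul_inv_cancel, mul_one]
    rwa [this]
  set Q := G ⧸ S
  -- |Q| is odd
  have hcard : Nat.card G = Nat.card Q * Nat.card S :=
    Subgroup.card_eq_card_quotient_mul_card_subgroup S
  have hQodd : Odd (Nat.card Q) := by
    rcases Nat.even_or_odd (Nat.card Q) with he | ho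
    · exact absurd hodd (Nat.not_odd_iff_even.mpr (hcard ▸ he.mul_right _))
    · exact ho
  have hcop : (Nat.card Q).Coprime 2 := hQodd.coprime_two_right
  -- squaring is a bijection on Q
  set e : Q ≃ Q := powCoprime hcop with he
  have he_apply : ∀ q : Q, e q = q ^ 2 := fun q => rfl
  have part_a : ∀ a : G, a ∉ S →
      (QuotientGroup.mk a : G ⧸ S) ≠ (QuotientGroup.mk a⁻¹ : G ⧸ S) := by
    intro a ha hEq
    apply ha
    rw [← QuotientGroup.eq_one_iff]
    have h1 : e (QuotientGroup.mk a : Q) = e 1 := by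
      rw [he_apply, he_apply, one_pow, pow_two]
      rw [QuotientGroup.mk_inv] at hEq
      rw [← mul_inv_cancel (QuotientGroup.mk a : Q)]
      exact congrArg (_ * ·) hEq
    exact e.injective h1
  refine ⟨part_a, ?_⟩
  set σ : Q ≃ Q := e.symm with hσ
  have hσ_sq : ∀ q : Q, (σ q) ^ 2 = q := fun q => by
    rw [← he_apply]; exact e.apply_symm_apply q
  have hσ_inv : ∀ q : Q, σ q⁻¹ = (σ q)⁻¹ := by
    intro q
    apply e.injective
    rw [e.apply_symm_apply, he_apply, inv_pow, hσ_sq]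
  have hσ_one : σ 1 = 1 := by
    apply e.injective
    rw [e.apply_symm_apply, he_apply, one_pow]
  -- define the section
  let f : Q → G := fun q => (σ q).out * ((σ q⁻¹).out)⁻¹
  have hmk : ∀ q : Q, (QuotientGroup.mk (f q) : Q) = q := by
    intro q
    show (QuotientGroup.mk ((σ q).out * ((σ q⁻¹).out)⁻¹) : Q) = q
    rw [QuotientGroup.mk_mul, QuotientGroup.mk_inv, QuotientGroup.out_eq',
      QuotientGroup.out_eq', hσ_inv, inv_inv, ← pow_two, hσ_sq]
  have hf_inv : ∀ q : Q, f q⁻¹ = (f q)⁻¹ := by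
    intro q
    show (σ q⁻¹).out * ((σ q⁻¹⁻¹).out)⁻¹ = ((σ q).out * ((σ q⁻¹).out)⁻¹)⁻¹
    rw [inv_inv, mul_inv_rev, inv_inv]
  have hf_one : f 1 = 1 := by
    show (σ 1).out * ((σ 1⁻¹).out)⁻¹ = 1
    rw [inv_one, mul_inv_cancel]
  refine ⟨Set.range f, ⟨1, hf_one⟩, ?_, ?_⟩
  · rintro a ⟨q, rfl⟩
    exact ⟨q⁻¹, hf_inv q⟩
  · intro g
    refine ⟨f (QuotientGroup.mk g), ⟨⟨_, rfl⟩, hmk _⟩, ?_⟩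
    rintro r ⟨⟨q, rfl⟩, hr⟩
    have : q = (QuotientGroup.mk g : Q) := by rw [← hmk q]; exact hr
    rw [this]
end

section
/- Let G be a finite group, s ∈ G an element of order m, S = ⟨s⟩, and R ⊆ G a transversal of the left cosets of S (so every element of G is uniquely a·sᵏ with a ∈ R, 0 ≤ k < m). Let ρ = exp(2πi/m) ∈ ℂ and let f : G → ℂ be any function. Define matrices X and H indexed by R × Fin m with entries in ℂ by X (a,i) (b,j) = f( a·sⁱ·(b·sʲ)⁻¹ ) and H (a,i) (b,j) = (if a = b then ρ^{i·j} else 0). Then H is invertible, and the matrix H⁻¹ · X · H satisfies (H⁻¹ · X · H) (a,i) (b,j) = 0 whenever i ≠ j; that is, every block of the conjugated group matrix is a diagonal matrix. -/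
private lemma pow_mod_eq_of_pow_eq_one {M : Type*} [Monoid M] (x : M) {m : ℕ}
    (hx : x ^ m = 1) (p : ℕ) : x ^ p = x ^ (p % m) := by
  conv_lhs => rw [← Nat.div_add_mod p m]
  rw [pow_add, pow_mul, hx, one_pow, one_mul]

private lemma pow_congr_mod' {M : Type*} [Monoid M] (x : M) {m : ℕ}
    (hx : x ^ m = 1) {p q : ℕ} (h : p ≡ q [MOD m]) : x ^ p = x ^ q := by
  rw [pow_mod_eq_of_pow_eq_one x hx p, pow_mod_eq_of_pow_eq_one x hx q, h]

/-- Proposition 6.2 (partial diagonalization of the group matrix): let `G` be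
a finite group, `s ∈ G` of order `m`, `R` a transversal of the left cosets of
`⟨s⟩`, and `f : G → ℂ`. Let `X` be the group matrix `X (a,i) (b,j) =
f(a·sⁱ·(b·sʲ)⁻¹)` and let `H = diag(P, …, P)` be the block diagonal Fourier
matrix `H (a,i) (b,j) = (if a = b then ρ^(i·j) else 0)`, `ρ = exp(2πi/m)`.
Then `H` is invertible and every block of `H⁻¹·X·H` is a diagonal matrix:
`(H⁻¹·X·H) (a,i) (b,j) = 0` whenever `i ≠ j`. -/
theorem group_matrix_partial_diagonalization
    {G : Type*} [Group G] [Fintype G] [DecidableEq G]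
    (s : G) (m : ℕ) [NeZero m] (hs : orderOf s = m)
    (R : Finset G)
    (htrans : Function.Bijective fun p : R × Fin m => (p.1 : G) * s ^ (p.2 : ℕ))
    (ρ : ℂ) (hρ : ρ = Complex.exp (2 * (Real.pi : ℂ) * Complex.I / (m : ℂ)))
    (f : G → ℂ)
    (X H : Matrix (R × Fin m) (R × Fin m) ℂ)
    (hX : ∀ (a b : R) (i j : Fin m),
      X (a, i) (b, j) = f ((a : G) * s ^ (i : ℕ) * ((b : G) * s ^ (j : ℕ))⁻¹))
    (hH : ∀ (a b : R) (i j : Fin m),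
      H (a, i) (b, j) = if a = b then ρ ^ ((i : ℕ) * (j : ℕ)) else 0) :
    IsUnit H ∧
      ∀ (a b : R) (i j : Fin m), i ≠ j → (H⁻¹ * X * H) (a, i) (b, j) = 0 := by
  classical
  have hm : m ≠ 0 := NeZero.ne m
  have hprim : IsPrimitiveRoot ρ m := by
    rw [hρ]; exact Complex.isPrimitiveRoot_exp m hm
  have hρne : ρ ≠ 0 := by rw [hρ]; exact Complex.exp_ne_zero _
  have hρord : orderOf ρ = m := hprim.eq_orderOf.symm
  have hρm : ρ ^ m = 1 := hprim.pow_eq_one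
  have hmC : (m : ℂ) ≠ 0 := Nat.cast_ne_zero.mpr hm
  -- the inverse of `H`
  set K : Matrix (R × Fin m) (R × Fin m) ℂ := fun p q =>
    if p.1 = q.1 then (m : ℂ)⁻¹ * ρ ^ ((m - (p.2 : ℕ)) * (q.2 : ℕ)) else 0 with hK
  -- Fourier orthogonality
  have fourier : ∀ i j : Fin m,
      (∑ l : Fin m, ρ ^ ((i : ℕ) * (l : ℕ)) * ρ ^ ((m - (l : ℕ)) * (j : ℕ))) =
        if i = j then (m : ℂ) else 0 := by
    intro i j
    have hterm : ∀ l : Fin m,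
        ρ ^ ((i : ℕ) * (l : ℕ)) * ρ ^ ((m - (l : ℕ)) * (j : ℕ))
          = (ρ ^ (i : ℕ) / ρ ^ (j : ℕ)) ^ (l : ℕ) := by
      intro l
      have h1 : ρ ^ ((m - (l : ℕ)) * (j : ℕ)) * ρ ^ ((l : ℕ) * (j : ℕ)) = 1 := by
        rw [← pow_add]
        have hlm : (l : ℕ) ≤ m := le_of_lt l.isLt
        have : (m - (l : ℕ)) * (j : ℕ) + (l : ℕ) * (j : ℕ) = m * (j : ℕ) := by
          rw [← add_mul, Nat.sub_add_cancel hlm]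
        rw [this, pow_mul, hρm, one_pow]
      have h2 : ρ ^ ((m - (l : ℕ)) * (j : ℕ)) = (ρ ^ ((l : ℕ) * (j : ℕ)))⁻¹ :=
        eq_inv_of_mul_eq_one_left h1
      rw [h2, div_pow, ← pow_mul, ← pow_mul, div_eq_mul_inv, Nat.mul_comm (j : ℕ) (l : ℕ)]
    simp only [hterm]
    rw [Fin.sum_univ_eq_sum_range (fun k => (ρ ^ (i : ℕ) / ρ ^ (j : ℕ)) ^ k) m]
    set ζ : ℂ := ρ ^ (i : ℕ) / ρ ^ (j : ℕ) with hζ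
    have hζm : ζ ^ m = 1 := by
      rw [hζ, div_pow, ← pow_mul, ← pow_mul, Nat.mul_comm (i : ℕ) m,
        Nat.mul_comm (j : ℕ) m, pow_mul, pow_mul, hρm, one_pow, one_pow, div_one]
    by_cases hij : i = j
    · subst hij
      have : ζ = 1 := by rw [hζ, div_self (pow_ne_zero _ hρne)]
      simp [this]
    · have hζ1 : ζ ≠ 1 := by
        intro hc
        rw [hζ, div_eq_one_iff_eq (pow_ne_zero _ hρne)] at hc
        exact hij (Fin.ext (hprim.pow_inj i.isLt j.isLt hc))
      rw [geom_sum_eq hζ1, hζm, sub_self, zero_div, if_neg hij]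
  -- H * K = 1
  have hHK : H * K = 1 := by
    ext ⟨a, i⟩ ⟨b, j⟩
    rw [Matrix.mul_apply, Fintype.sum_prod_type]
    have hcol : ∀ c : R, c ≠ a →
        (∑ l : Fin m, H (a, i) (c, l) * K (c, l) (b, j)) = 0 := by
      intro c hc
      apply Finset.sum_eq_zero
      intro l _
      rw [hH, if_neg (fun h => hc h.symm), zero_mul]
    rw [Finset.sum_eq_single a (fun c _ hc => hcol c hc)
      (fun h => absurd (Finset.mem_univ a) h)]
    simp only [hH, hK, eq_self_iff_true, if_true]
    by_cases hab : a = b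
    · subst hab
      simp only [eq_self_iff_true, if_true]
      have : (∑ l : Fin m, ρ ^ ((i : ℕ) * (l : ℕ)) *
          ((m : ℂ)⁻¹ * ρ ^ ((m - (l : ℕ)) * (j : ℕ))))
          = (m : ℂ)⁻¹ * ∑ l : Fin m, ρ ^ ((i : ℕ) * (l : ℕ)) *
            ρ ^ ((m - (l : ℕ)) * (j : ℕ)) := by
        rw [Finset.mul_sum]; apply Finset.sum_congr rfl; intro l _; ring
      rw [this, fourier i j]
      by_cases hij : i = j
      · subst hij
        rw [if_pos rfl, inv_mul_cancel₀ hmC, Matrix.one_apply_eq]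
      · rw [if_neg hij, mul_zero, Matrix.one_apply_ne (by simp [hij])]
    · have h1 : (1 : Matrix (R × Fin m) (R × Fin m) ℂ) (a, i) (b, j) = 0 :=
        Matrix.one_apply_ne (by simp [hab])
      rw [h1]
      apply Finset.sum_eq_zero
      intro l _
      rw [if_neg hab, mul_zero]
  have hdet : IsUnit H.det := Matrix.isUnit_det_of_right_inverse hHK
  have hunit : IsUnit H := (Matrix.isUnit_iff_isUnit_det H).mpr hdet
  refine ⟨hunit, ?_⟩
  -- the diagonalized matrix
  set D : Matrix (R × Fin m) (R × Fin m) ℂ := fun p q =>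
    if p.2 = q.2 then
      ∑ t : Fin m, f ((p.1 : G) * s ^ (t : ℕ) * (q.1 : G)⁻¹) *
        ρ ^ ((m - (t : ℕ)) * (q.2 : ℕ))
    else 0 with hD
  -- X * H = H * D
  have hXH : X * H = H * D := by
    ext ⟨a, i⟩ ⟨b, j⟩
    rw [Matrix.mul_apply, Matrix.mul_apply, Fintype.sum_prod_type,
      Fintype.sum_prod_type]
    -- LHS collapses at c = b
    have hL : ∀ c : R, c ≠ b →
        (∑ l : Fin m, X (a, i) (c, l) * H (c, l) (b, j)) = 0 := by
      intro c hc
      apply Finset.sum_eq_zero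
      intro l _
      rw [hH, if_neg hc, mul_zero]
    rw [Finset.sum_eq_single b (fun c _ hc => hL c hc)
      (fun h => absurd (Finset.mem_univ b) h)]
    -- RHS collapses at c = a
    have hR : ∀ c : R, c ≠ a →
        (∑ l : Fin m, H (a, i) (c, l) * D (c, l) (b, j)) = 0 := by
      intro c hc
      apply Finset.sum_eq_zero
      intro l _
      rw [hH, if_neg (fun h => hc h.symm), zero_mul]
    rw [Finset.sum_eq_single a (fun c _ hc => hR c hc)
      (fun h => absurd (Finset.mem_univ a) h)]
    -- RHS inner sum collapses at l = j
    have hR2 : ∀ l : Fin m, l ≠ j → H (a, i) (a, l) * D (a, l) (b, j) = 0 := by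
      intro l hl
      rw [hD]
      simp only [if_neg hl, mul_zero]
    rw [Finset.sum_eq_single j (fun l _ hl => hR2 l hl)
      (fun h => absurd (Finset.mem_univ j) h)]
    simp only [hX, hH, hD, eq_self_iff_true, if_true, Finset.mul_sum]
    -- reindex the left sum by t = i - l, i.e. l = i - t
    refine Eq.trans ((Equiv.sum_comp (Equiv.subLeft i) _).symm)
      (Finset.sum_congr rfl fun t _ => ?_)
    simp only [Equiv.subLeft_apply]
    -- group element identity
    have hval : ((i - t : Fin m) : ℕ) = (m - (t : ℕ) + (i : ℕ)) % m := by
      rw [Fin.sub_def]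
    have hcong : ((i - t : Fin m) : ℕ) ≡ (i : ℕ) + (m - (t : ℕ)) [MOD m] := by
      rw [hval, Nat.add_comm (m - (t : ℕ)) (i : ℕ)]
      exact Nat.mod_modEq _ m
    have hg : (a : G) * s ^ (i : ℕ) * ((b : G) * s ^ ((i - t : Fin m) : ℕ))⁻¹
        = (a : G) * s ^ (t : ℕ) * (b : G)⁻¹ := by
      have h1 : s ^ ((i - t : Fin m) : ℕ) = s ^ ((i : ℕ) + (m - (t : ℕ))) :=
        pow_congr_mod' s (by rw [← hs]; exact pow_orderOf_eq_one s) hcong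
      have h2 : s ^ (m - (t : ℕ)) * s ^ (t : ℕ) = 1 := by
        rw [← pow_add, Nat.sub_add_cancel (le_of_lt t.isLt), ← hs, pow_orderOf_eq_one]
      have h3 : (s ^ ((i - t : Fin m) : ℕ))⁻¹ = s ^ (t : ℕ) * (s ^ (i : ℕ))⁻¹ := by
        rw [h1, pow_add, mul_inv_rev]
        congr 1
        exact inv_eq_of_mul_eq_one_right h2
      rw [mul_inv_rev, h3]
      group
    rw [hg]
    -- root of unity identity
    have hcong2 : ((i - t : Fin m) : ℕ) * (j : ℕ)
        ≡ ((i : ℕ) * (j : ℕ) + (m - (t : ℕ)) * (j : ℕ)) [MOD m] := by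
      have := hcong.mul_right (j : ℕ)
      rwa [add_mul] at this
    have hr : ρ ^ (((i - t : Fin m) : ℕ) * (j : ℕ))
        = ρ ^ ((i : ℕ) * (j : ℕ)) * ρ ^ ((m - (t : ℕ)) * (j : ℕ)) := by
      rw [← pow_add]
      exact pow_congr_mod' ρ hρm hcong2
    rw [hr]
    ring
  -- finish
  intro a b i j hij
  have hinv : H⁻¹ * H = 1 := Matrix.nonsing_inv_mul H hdet
  have : H⁻¹ * X * H = D := by
    rw [Matrix.mul_assoc, hXH, ← Matrix.mul_assoc, hinv, Matrix.one_mul]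
  rw [this, hD]
  exact if_neg hij
end
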